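/- Let N be a net, P = ((S', T', F', M₀'), π) a GR-process of N, and U ⊆ T' a set of transitions such that (t,u) ∈ F'⁺ and u ∈ U imply t ∈ U. Then there is a unique prefix of P whose set of transitions is U (namely the restriction of P to U together with all places that are initial or postplaces of transitions in U). -/

import Mathlib

open scoped Classical

noncomputable section

/-- A place/transition net: `pre t s` and `post t s` are the arc weights
`F(s,t)` and `F(t,s)` of the flow relation, and `M0` is the initial marking.
Every transition has a finite non-empty set of preplaces and a finite set of
postplaces. -/
structure Net (S : Type*) (T : Type*) where
  pre : T → S → ℕ
  post : T → S → ℕ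
  M0 : S → ℕ
  pre_fin : ∀ t, {s | pre t s ≠ 0}.Finite
  pre_ne : ∀ t, ∃ s, pre t s ≠ 0
  post_fin : ∀ t, {s | post t s ≠ 0}.Finite

namespace Net

variable {S T : Type*}

/-- `•G`: the multiset of preplaces of a finite multiset `G` of transitions,
as a function `S → ℕ`. -/
def preM (N : Net S T) (G : Multiset T) (s : S) : ℕ :=
  (G.map fun t => N.pre t s).sum

/-- `G•`: the multiset of postplaces of a finite multiset `G` of transitions. -/
def postM (N : Net S T) (G : Multiset T) (s : S) : ℕ :=
  (G.map fun t => N.post t s).sum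

/-- The (non-empty, finite) multiset `G` of transitions is enabled in marking `M`. -/
def Enabled (N : Net S T) (M : S → ℕ) (G : Multiset T) : Prop :=
  G ≠ 0 ∧ ∀ s, N.preM G s ≤ M s

/-- `G` is a step from `M` to `M'`. -/
def Step (N : Net S T) (M : S → ℕ) (G : Multiset T) (M' : S → ℕ) : Prop :=
  N.Enabled M G ∧ ∀ s, M' s = M s - N.preM G s + N.postM G s

/-- `M →σ M'`: sequential firing of the word `σ` of transitions. -/
def FireSeq (N : Net S T) : (S → ℕ) → List T → (S → ℕ) → Prop
  | M, [], M' => M' = M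
  | M, t :: σ, M' => ∃ M₁, N.Step M {t} M₁ ∧ N.FireSeq M₁ σ M'

/-- `σ` is a firing sequence of `N`. -/
def FS (N : Net S T) (σ : List T) : Prop := ∃ M', N.FireSeq N.M0 σ M'

/-- `M` is reachable from the initial marking. -/
def Reachable (N : Net S T) (M : S → ℕ) : Prop := ∃ σ, N.FireSeq N.M0 σ M

/-- Two firing sequences are adjacent iff they differ only in the exchange of
two neighbouring transitions that could have been fired in one step. -/
def Adjacent (N : Net S T) (σ ρ : List T) : Prop :=
  N.FS σ ∧ N.FS ρ ∧
    ∃ (σ₁ : List T) (t u : T) (σ₂ : List T) (M : S → ℕ),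
      σ = σ₁ ++ t :: u :: σ₂ ∧ ρ = σ₁ ++ u :: t :: σ₂ ∧
      N.FireSeq N.M0 σ₁ M ∧ N.Enabled M (t ::ₘ {u})

/-- `↔*`: the reflexive transitive closure of adjacency. -/
def AdjEquiv (N : Net S T) : List T → List T → Prop :=
  Relation.ReflTransGen N.Adjacent

/-- A structural conflict net: transitions that can occur together in a step
never share a preplace. -/
def StructuralConflictNet (N : Net S T) : Prop :=
  ∀ t u : T, (∃ M, N.Reachable M ∧ N.Enabled M (t ::ₘ {u})) →
    ∀ s, N.pre t s = 0 ∨ N.pre u s = 0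

/-- The finite non-empty multiset `G` of transitions is in (semantic) conflict
in the marking `M`: every `G↾{t}` is enabled but `G` itself is not. -/
def InConflict (N : Net S T) (M : S → ℕ) (G : Multiset T) : Prop :=
  G ≠ 0 ∧ (∀ t ∈ G, N.Enabled M (Multiset.replicate (G.count t) t)) ∧
    ¬ N.Enabled M G

/-- `N` is (semantic) conflict-free. -/
def ConflictFree (N : Net S T) : Prop :=
  ∀ M, N.Reachable M → ∀ G : Multiset T, ¬ N.InConflict M G

end Net

/-- The type of firing sequences of `N`. -/
def FSeq {S T : Type*} (N : Net S T) := {σ : List T // N.FS σ}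

/-- Partial FS-runs: `↔*`-equivalence classes of firing sequences. -/
def PartialFSRun {S T : Type*} (N : Net S T) :=
  Quot (fun σ ρ : FSeq N => N.AdjEquiv σ.1 ρ.1)

/-- `[σ]`, the `↔*`-equivalence class of a firing sequence. -/
def fsClass {S T : Type*} (N : Net S T) (σ : FSeq N) : PartialFSRun N :=
  Quot.mk _ σ

/-- The prefix order on partial FS-runs: `[σ] ≤ [ρ]` iff
`∃ μ, σ ≤ μ ↔* ρ`. -/
def fsRunLE {S T : Type*} (N : Net S T) (x y : PartialFSRun N) : Prop :=
  ∃ σ ρ : FSeq N, fsClass N σ = x ∧ fsClass N ρ = y ∧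
    ∃ μ : List T, σ.1 <+: μ ∧ N.AdjEquiv μ ρ.1

/-- An FS-run: a prefix-closed and directed set of partial FS-runs. -/
def IsFSRun {S T : Type*} (N : Net S T) (R : Set (PartialFSRun N)) : Prop :=
  (∀ x y, fsRunLE N x y → y ∈ R → x ∈ R) ∧
  (∀ x ∈ R, ∀ y ∈ R, ∃ z ∈ R, fsRunLE N x z ∧ fsRunLE N y z)

/-- An FS-run `R` is conflict-free iff whenever, for every `t` in a finite
non-empty multiset `G`, the class of `σ t^{G(t)}` belongs to `R` and
`M₀ →σ →(G↾{t})`, then `M₀ →σ →G`. -/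
def ConflictFreeFSRun {S T : Type*} (N : Net S T)
    (R : Set (PartialFSRun N)) : Prop :=
  ∀ (G : Multiset T) (σ : List T), G ≠ 0 →
    (∀ t ∈ G,
      (∃ h : N.FS (σ ++ List.replicate (G.count t) t),
        fsClass N ⟨σ ++ List.replicate (G.count t) t, h⟩ ∈ R) ∧
      ∃ M, N.FireSeq N.M0 σ M ∧
        N.Enabled M (Multiset.replicate (G.count t) t)) →
    ∃ M, N.FireSeq N.M0 σ M ∧ N.Enabled M G

/-- The raw data of a candidate (GR-)process of a net with places `S` and
transitions `T`: an occurrence net whose places are drawn from `α` and whose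
transitions are drawn from `β`, together with the projections to `S` and `T`. -/
structure RawProc (S T α β : Type*) where
  places : Set α
  transitions : Set β
  flowPT : α → β → ℕ
  flowTP : β → α → ℕ
  initMark : α → ℕ
  projS : α → S
  projT : β → T

namespace RawProc

variable {S T α β : Type*}

/-- The flow relation of the occurrence net, as a relation on `α ⊕ β`. -/
def flowRel (P : RawProc S T α β) : (α ⊕ β) → (α ⊕ β) → Prop := fun x y =>
  match x, y with
  | Sum.inl p, Sum.inr t => P.flowPT p t ≠ 0
  | Sum.inr t, Sum.inl p => P.flowTP t p ≠ 0
  | _, _ => False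

/-- `F⁺`, the transitive closure of the flow relation. -/
def causal (P : RawProc S T α β) : (α ⊕ β) → (α ⊕ β) → Prop :=
  Relation.TransGen P.flowRel

/-- `P` is finite iff its set of transitions is finite. -/
def FiniteProc (P : RawProc S T α β) : Prop := P.transitions.Finite

/-- `Q` is a prefix of `P` (written `Q ≤ P`): the places and transitions of `Q`
are included in those of `P`, the initial markings coincide, and flow relation
and projection of `Q` are the restrictions of those of `P`. -/
def IsPrefix (Q P : RawProc S T α β) : Prop :=
  Q.places ⊆ P.places ∧ Q.transitions ⊆ P.transitions ∧
  Q.initMark = P.initMark ∧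
  (∀ p ∈ Q.places, ∀ t ∈ Q.transitions,
    Q.flowPT p t = P.flowPT p t ∧ Q.flowTP t p = P.flowTP t p) ∧
  (∀ p ∈ Q.places, Q.projS p = P.projS p) ∧
  (∀ t ∈ Q.transitions, Q.projT t = P.projT t)

/-- Isomorphism of processes of the same net: a bijection between places and
between transitions preserving flow, initial marking and the projections. -/
def Iso (P Q : RawProc S T α β) : Prop :=
  ∃ (fS : α → α) (fT : β → β),
    Set.BijOn fS P.places Q.places ∧ Set.BijOn fT P.transitions Q.transitions ∧
    (∀ p ∈ P.places, ∀ t ∈ P.transitions,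
      Q.flowPT (fS p) (fT t) = P.flowPT p t ∧
      Q.flowTP (fT t) (fS p) = P.flowTP t p) ∧
    (∀ p ∈ P.places, Q.initMark (fS p) = P.initMark p) ∧
    (∀ p ∈ P.places, Q.projS (fS p) = P.projS p) ∧
    (∀ t ∈ P.transitions, Q.projT (fT t) = P.projT t)

/-- `swap(P,p,q)`: exchange the outgoing arcs of the places `p` and `q`. -/
def swap (P : RawProc S T α β) (p q : α) : RawProc S T α β :=
  { P with flowPT := fun x t =>
      if x = p then P.flowPT q t
      else if x = q then P.flowPT p t
      else P.flowPT x t }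

/-- One step swapping equivalence `P ≈s Q`: `swap(P,p,q)` is isomorphic to `Q`
for some causally unrelated places `p`, `q` with the same image in the net. -/
def SwapStep (P Q : RawProc S T α β) : Prop :=
  ∃ p q : α, p ∈ P.places ∧ q ∈ P.places ∧ P.projS p = P.projS q ∧
    ¬ P.causal (Sum.inl p) (Sum.inl q) ∧ ¬ P.causal (Sum.inl q) (Sum.inl p) ∧
    Iso (P.swap p q) Q

/-- `≈s*`: the reflexive transitive closure of one step swapping equivalence. -/
def SwapEquiv : RawProc S T α β → RawProc S T α β → Prop :=
  Relation.ReflTransGen SwapStep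

/-- `Lin(P)`: the linearisations of a finite process `P`, i.e. the images under
the projection of the enumerations of its transitions compatible with `F*`. -/
def Lin (P : RawProc S T α β) : Set (List T) :=
  { σ | ∃ ts : List β, ts.Nodup ∧ (∀ t : β, t ∈ ts ↔ t ∈ P.transitions) ∧
      (∀ (i j : ℕ) (hi : i < ts.length) (hj : j < ts.length),
        Relation.ReflTransGen P.flowRel
          (Sum.inr (ts.get ⟨i, hi⟩)) (Sum.inr (ts.get ⟨j, hj⟩)) → i ≤ j) ∧
      σ = ts.map P.projT }

end RawProc

/-- `P` is a (GR-)process of the net `N`: its underlying net is an occurrence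
net (unbranched places, acyclic flow, finite causal pasts, transitions with
finite non-empty presets and finite postsets), the flow, initial marking and
projections are normalised to vanish outside the places/transitions, and the
projection maps the process onto `N` respecting initial marking and arc
weights (counted via the preimages of the projection). -/
structure IsProcessOf {S T α β : Type*} (N : Net S T)
    (P : RawProc S T α β) : Prop where
  flowPT_dom : ∀ p t, P.flowPT p t ≠ 0 → p ∈ P.places ∧ t ∈ P.transitions
  flowTP_dom : ∀ t p, P.flowTP t p ≠ 0 → p ∈ P.places ∧ t ∈ P.transitions
  initMark_dom : ∀ p, p ∉ P.places → P.initMark p = 0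
  pre_place : ∀ p ∈ P.places,
    {t | P.flowTP t p ≠ 0}.Subsingleton ∧ ∀ t, P.flowTP t p ≤ 1
  post_place : ∀ p ∈ P.places,
    {t | P.flowPT p t ≠ 0}.Subsingleton ∧ ∀ t, P.flowPT p t ≤ 1
  init_one : ∀ p ∈ P.places, (∀ t, P.flowTP t p = 0) → P.initMark p = 1
  init_zero : ∀ p ∈ P.places, (∃ t, P.flowTP t p ≠ 0) → P.initMark p = 0
  acyclic : ∀ x, ¬ P.causal x x
  finite_past : ∀ t ∈ P.transitions,
    {u : β | P.causal (Sum.inr u) (Sum.inr t)}.Finite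
  t_pre_fin : ∀ t ∈ P.transitions, {p | P.flowPT p t ≠ 0}.Finite
  t_pre_ne : ∀ t ∈ P.transitions, ∃ p, P.flowPT p t ≠ 0
  t_post_fin : ∀ t ∈ P.transitions, {p | P.flowTP t p ≠ 0}.Finite
  proj_init_fin : ∀ s : S, {p | P.projS p = s ∧ P.initMark p ≠ 0}.Finite
  proj_init : ∀ s : S, (∑ᶠ p ∈ {p | P.projS p = s}, P.initMark p) = N.M0 s
  proj_pre : ∀ t ∈ P.transitions, ∀ s : S,
    (∑ᶠ p ∈ {p | P.projS p = s}, P.flowPT p t) = N.pre (P.projT t) s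
  proj_post : ∀ t ∈ P.transitions, ∀ s : S,
    (∑ᶠ p ∈ {p | P.projS p = s}, P.flowTP t p) = N.post (P.projT t) s

/-- The type of finite GR-processes of `N` with places in `α` and transitions
in `β`. -/
def FinProcOf {S T : Type*} (N : Net S T) (α β : Type*) :=
  {P : RawProc S T α β // IsProcessOf N P ∧ P.FiniteProc}

/-- Partial BD-runs: `≈s*`-equivalence classes of finite GR-processes. -/
def PartialBDRun {S T : Type*} (N : Net S T) (α β : Type*) :=
  Quot (fun P Q : FinProcOf N α β => RawProc.SwapEquiv P.1 Q.1)

/-- `⟦P⟧`, the `≈s*`-equivalence class of a finite process. -/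
def bdClass {S T α β : Type*} (N : Net S T) (P : FinProcOf N α β) :
    PartialBDRun N α β :=
  Quot.mk _ P

/-- The lifted prefix relation on `≈s*`-equivalence classes:
`⟦P⟧ ≤ ⟦Q⟧` iff `P ≈s* P' ≤ Q' ≈s* Q` for some `P'`, `Q'`. -/
def bdRunLE {S T α β : Type*} (N : Net S T)
    (x y : PartialBDRun N α β) : Prop :=
  ∃ P Q : FinProcOf N α β, bdClass N P = x ∧ bdClass N Q = y ∧
    ∃ P' Q' : RawProc S T α β,
      RawProc.SwapEquiv P.1 P' ∧ RawProc.IsPrefix P' Q' ∧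
      RawProc.SwapEquiv Q' Q.1

/-- A BD-run: a prefix-closed and directed set of partial BD-runs. -/
def IsBDRun {S T α β : Type*} (N : Net S T)
    (R : Set (PartialBDRun N α β)) : Prop :=
  (∀ x y, bdRunLE N x y → y ∈ R → x ∈ R) ∧
  (∀ x ∈ R, ∀ y ∈ R, ∃ z ∈ R, bdRunLE N x z ∧ bdRunLE N y z)

/-- `⌊P⌋ = ↓{⟦P'⟧ | P' ≤ P, P' finite}`: the prefix-closure of the set of
classes of finite prefixes of the process `P`. -/
def BDify {S T α β : Type*} (N : Net S T) (P : RawProc S T α β) :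
    Set (PartialBDRun N α β) :=
  { x | ∃ Q : FinProcOf N α β, RawProc.IsPrefix Q.1 P ∧ bdRunLE N x (bdClass N Q) }

/-- Swapping equivalence `P ≈s∞ Q` of (possibly infinite) processes:
`↓{⟦P'⟧ | P' ≤ P, P' finite} = ↓{⟦Q'⟧ | Q' ≤ Q, Q' finite}`. -/
def SwapEquivInf {S T α β : Type*} (N : Net S T)
    (P Q : RawProc S T α β) : Prop :=
  BDify N P = BDify N Q

/-- A canonical carrier type, large enough to host every GR-process of a net
with places `S` and transitions `T`. -/
abbrev BigCarrier (S T : Type*) := Set ((S ⊕ T) × ℕ)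

end

/-!
A prefix of `P` with transitions `U` has no choice about its places. It keeps the initial
marking, so it contains the initial places of `P`, and its non-initial places must have their
pretransition in `U`. It also contains every postplace in `P` of a transition `t ∈ U`: over each
place `s` of `N`, the postplaces of `t` in the prefix and in `P` are both counted by
`F(π t, s)`. Conversely, restricting `P` to `U` and these places gives a process; downward
closedness of `U` is what makes the transitions in `U` keep all their preplaces.
-/

theorem eq_of_le_of_finsum_mem_eq {γ : Type*} {f g : γ → ℕ} {s : Set γ}
    (hf : f.support.Finite) (hle : ∀ a, g a ≤ f a)
    (hsum : ∑ᶠ a ∈ s, g a = ∑ᶠ a ∈ s, f a) {a : γ} (ha : a ∈ s) : g a = f a := by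
  set t := (hf.inter_of_right s).toFinset
  have hsupp : ∀ h : γ → ℕ, (∀ a, h a ≤ f a) → s ∩ h.support ⊆ t := fun h hh b hb =>
    (hf.inter_of_right s).mem_toFinset.2
      ⟨hb.1, fun hfb => hb.2 (Nat.eq_zero_of_le_zero (hfb ▸ hh b))⟩
  have ht : ↑t ⊆ s := fun b hb => ((hf.inter_of_right s).mem_toFinset.1 hb).1
  rw [finsum_mem_eq_sum_of_subset g (hsupp g hle) ht,
    finsum_mem_eq_sum_of_subset f (hsupp f fun _ => le_rfl) ht,
    Finset.sum_eq_sum_iff_of_le fun b _ => hle b] at hsum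
  by_cases hat : a ∈ t
  · exact hsum a hat
  · have hfa : f a = 0 := by_contra fun hfa => hat (hsupp f (fun _ => le_rfl) ⟨ha, hfa⟩)
    have := hle a
    omega

namespace RawProc

variable {S T α β : Type*}

def prefixPlaces (P : RawProc S T α β) (U : Set β) : Set α :=
  {p ∈ P.places | (∀ t, P.flowTP t p = 0) ∨ ∃ t ∈ U, P.flowTP t p ≠ 0}

noncomputable def restrict (P : RawProc S T α β) (A : Set α) (U : Set β) : RawProc S T α β where
  places := A
  transitions := U
  flowPT p t := if p ∈ A ∧ t ∈ U then P.flowPT p t else 0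
  flowTP t p := if p ∈ A ∧ t ∈ U then P.flowTP t p else 0
  initMark := P.initMark
  projS := P.projS
  projT := P.projT

section restrict

variable (P : RawProc S T α β) (A : Set α) (U : Set β)

theorem restrict_flowPT_le (p : α) (t : β) : (P.restrict A U).flowPT p t ≤ P.flowPT p t := by
  simp only [restrict]
  split_ifs <;> simp

theorem restrict_flowTP_le (t : β) (p : α) : (P.restrict A U).flowTP t p ≤ P.flowTP t p := by
  simp only [restrict]
  split_ifs <;> simp

theorem restrict_flowPT_ne_zero {p : α} {t : β} :
    (P.restrict A U).flowPT p t ≠ 0 ↔ P.flowPT p t ≠ 0 ∧ p ∈ A ∧ t ∈ U := by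
  simp only [restrict]
  split_ifs <;> tauto

theorem restrict_flowTP_ne_zero {t : β} {p : α} :
    (P.restrict A U).flowTP t p ≠ 0 ↔ P.flowTP t p ≠ 0 ∧ p ∈ A ∧ t ∈ U := by
  simp only [restrict]
  split_ifs <;> tauto

variable {P A U}

theorem restrict_flowPT_eq (hU : ∀ t ∈ U, ∀ p, P.flowPT p t ≠ 0 → p ∈ A) {t : β}
    (ht : t ∈ U) (p : α) : (P.restrict A U).flowPT p t = P.flowPT p t := by
  by_cases hp : P.flowPT p t = 0
  · exact Nat.eq_zero_of_le_zero (hp ▸ P.restrict_flowPT_le A U p t) |>.trans hp.symm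
  · exact if_pos ⟨hU t ht p hp, ht⟩

theorem restrict_flowTP_eq (hU : ∀ t ∈ U, ∀ p, P.flowTP t p ≠ 0 → p ∈ A) {t : β}
    (ht : t ∈ U) (p : α) : (P.restrict A U).flowTP t p = P.flowTP t p := by
  by_cases hp : P.flowTP t p = 0
  · exact Nat.eq_zero_of_le_zero (hp ▸ P.restrict_flowTP_le A U t p) |>.trans hp.symm
  · exact if_pos ⟨hU t ht p hp, ht⟩

theorem causal_of_causal_restrict {x y : α ⊕ β} (h : (P.restrict A U).causal x y) :
    P.causal x y := by
  refine Relation.TransGen.mono (fun a b hab => ?_) _ _ h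
  rcases a with p | t <;> rcases b with q | u
  · exact hab
  · exact ((P.restrict_flowPT_ne_zero A U).1 hab).1
  · exact ((P.restrict_flowTP_ne_zero A U).1 hab).1
  · exact hab

theorem isPrefix_restrict (hA : A ⊆ P.places) (hU : U ⊆ P.transitions) :
    (P.restrict A U).IsPrefix P :=
  ⟨hA, hU, rfl, fun _ hp _ ht => ⟨if_pos ⟨hp, ht⟩, if_pos ⟨hp, ht⟩⟩, fun _ _ => rfl,
    fun _ _ => rfl⟩

end restrict

end RawProc

namespace IsProcessOf

open RawProc

variable {S T α β : Type*} {N : Net S T} {P Q : RawProc S T α β}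

theorem restrict (hP : IsProcessOf N P) {A : Set α} {U : Set β} (hA : A ⊆ P.places)
    (hU : U ⊆ P.transitions) (hinit : ∀ p, P.initMark p ≠ 0 → p ∈ A)
    (hA_pre : ∀ p ∈ A, ∀ t, P.flowTP t p ≠ 0 → t ∈ U)
    (hU_pre : ∀ t ∈ U, ∀ p, P.flowPT p t ≠ 0 → p ∈ A)
    (hU_post : ∀ t ∈ U, ∀ p, P.flowTP t p ≠ 0 → p ∈ A) :
    IsProcessOf N (P.restrict A U) where
  flowPT_dom _ _ h := ((P.restrict_flowPT_ne_zero A U).1 h).2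
  flowTP_dom _ _ h := ((P.restrict_flowTP_ne_zero A U).1 h).2
  initMark_dom p hp := not_not.1 (mt (hinit p) hp)
  pre_place p hp := ⟨(hP.pre_place p (hA hp)).1.anti fun _ ht =>
      ((P.restrict_flowTP_ne_zero A U).1 ht).1,
    fun t => (P.restrict_flowTP_le A U t p).trans ((hP.pre_place p (hA hp)).2 t)⟩
  post_place p hp := ⟨(hP.post_place p (hA hp)).1.anti fun _ ht =>
      ((P.restrict_flowPT_ne_zero A U).1 ht).1,
    fun t => (P.restrict_flowPT_le A U p t).trans ((hP.post_place p (hA hp)).2 t)⟩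
  init_one p hp hnone := hP.init_one p (hA hp) fun t => by
    by_contra ht
    exact (P.restrict_flowTP_ne_zero A U).2 ⟨ht, hp, hA_pre p hp t ht⟩ (hnone t)
  init_zero p hp := fun ⟨t, ht⟩ =>
    hP.init_zero p (hA hp) ⟨t, ((P.restrict_flowTP_ne_zero A U).1 ht).1⟩
  acyclic x hx := hP.acyclic x (causal_of_causal_restrict hx)
  finite_past t ht := (hP.finite_past t (hU ht)).subset fun _ => causal_of_causal_restrict
  t_pre_fin t ht := (hP.t_pre_fin t (hU ht)).subset fun _ hp =>
    ((P.restrict_flowPT_ne_zero A U).1 hp).1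
  t_pre_ne t ht := by
    simpa only [restrict_flowPT_eq hU_pre ht] using hP.t_pre_ne t (hU ht)
  t_post_fin t ht := (hP.t_post_fin t (hU ht)).subset fun _ hp =>
    ((P.restrict_flowTP_ne_zero A U).1 hp).1
  proj_init_fin := hP.proj_init_fin
  proj_init := hP.proj_init
  proj_pre t ht s := (finsum_mem_congr rfl fun p _ => restrict_flowPT_eq hU_pre ht p).trans
    (hP.proj_pre t (hU ht) s)
  proj_post t ht s := (finsum_mem_congr rfl fun p _ => restrict_flowTP_eq hU_post ht p).trans
    (hP.proj_post t (hU ht) s)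

theorem restrict_prefixPlaces (hP : IsProcessOf N P) {U : Set β} (hU : U ⊆ P.transitions)
    (hdc : ∀ t u : β, u ∈ U → P.causal (Sum.inr t) (Sum.inr u) → t ∈ U) :
    IsProcessOf N (P.restrict (P.prefixPlaces U) U) := by
  refine hP.restrict (fun _ hp => hp.1) hU (fun p hp => ?_) (fun p hp t ht => ?_)
    (fun t ht p hp => ?_) (fun t ht p hp => ⟨(hP.flowTP_dom t p hp).1, .inr ⟨t, ht, hp⟩⟩)
  · have hpl : p ∈ P.places := by_contra fun h => hp (hP.initMark_dom p h)
    exact ⟨hpl, .inl fun t => by_contra fun ht => hp (hP.init_zero p hpl ⟨t, ht⟩)⟩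
  · obtain ⟨-, hnone | ⟨u, hu, hup⟩⟩ := hp
    · exact absurd (hnone t) ht
    · exact (hP.pre_place p (hP.flowTP_dom t p ht).1).1 ht hup ▸ hu
  · refine ⟨(hP.flowPT_dom p t hp).1, or_iff_not_imp_left.2 fun hpre => ?_⟩
    obtain ⟨u, hu⟩ := not_forall.1 hpre
    exact ⟨u, hdc u t ht (.head (show P.flowRel (.inr u) (.inl p) from hu)
      (.single (show P.flowRel (.inl p) (.inr t) from hp))), hu⟩

theorem flowTP_eq_of_isPrefix (hP : IsProcessOf N P) (hQ : IsProcessOf N Q)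
    (hQP : Q.IsPrefix P) {t : β} (ht : t ∈ Q.transitions) (p : α) :
    Q.flowTP t p = P.flowTP t p := by
  obtain ⟨-, htP, -, hflow, hprojS, hprojT⟩ := hQP
  have hle : ∀ q, Q.flowTP t q ≤ P.flowTP t q := fun q => by
    by_cases hq : Q.flowTP t q = 0
    · exact hq ▸ Nat.zero_le _
    · exact (hflow q (hQ.flowTP_dom t q hq).1 t ht).2.le
  have hsum : ∑ᶠ q ∈ {q | P.projS q = P.projS p}, Q.flowTP t q =
      ∑ᶠ q ∈ {q | P.projS q = P.projS p}, P.flowTP t q := by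
    rw [hP.proj_post t (htP ht), ← hprojT t ht, ← hQ.proj_post t ht]
    refine finsum_mem_inter_support_eq _ _ _ (Set.ext fun q => and_congr_left fun hq => ?_)
    show P.projS q = _ ↔ Q.projS q = _
    rw [hprojS q (hQ.flowTP_dom t q hq).1]
  exact eq_of_le_of_finsum_mem_eq (hP.t_post_fin t (htP ht)) hle hsum rfl

theorem places_eq_prefixPlaces_of_isPrefix (hP : IsProcessOf N P) (hQ : IsProcessOf N Q)
    (hQP : Q.IsPrefix P) : Q.places = P.prefixPlaces Q.transitions := by
  have hinit : Q.initMark = P.initMark := hQP.2.2.1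
  ext p
  constructor
  · intro hp
    refine ⟨hQP.1 hp, or_iff_not_imp_left.2 fun hpre => ?_⟩
    have hp0 : Q.initMark p = 0 := hinit ▸ hP.init_zero p (hQP.1 hp) (not_forall.1 hpre)
    obtain ⟨t, ht⟩ : ∃ t, Q.flowTP t p ≠ 0 := by
      by_contra! hnone
      have := hQ.init_one p hp hnone
      omega
    have htQ := (hQ.flowTP_dom t p ht).2
    exact ⟨t, htQ, (hQP.2.2.2.1 p hp t htQ).2 ▸ ht⟩
  · rintro ⟨hpP, hnone | ⟨t, ht, htp⟩⟩
    · by_contra hp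
      have h1 := hinit ▸ hP.init_one p hpP hnone
      have h0 := hQ.initMark_dom p hp
      omega
    · exact (hQ.flowTP_dom t p (flowTP_eq_of_isPrefix hP hQ hQP ht p ▸ htp)).1

end IsProcessOf

/-- remark below Definition 5 of the paper: any causally
downward closed set `U` of transitions of a GR-process `P` of `N` determines a
unique prefix of `P` whose set of transitions is `U`; its places are the
initial places of `P` together with the postplaces of transitions in `U`. -/
theorem unique_prefix_of_downward_closed {S T α β : Type*} (N : Net S T)
    (P : RawProc S T α β) (hP : IsProcessOf N P)
    (U : Set β) (hU : U ⊆ P.transitions)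
    (hdc : ∀ t u : β, u ∈ U → P.causal (Sum.inr t) (Sum.inr u) → t ∈ U) :
    ∃ Q : RawProc S T α β,
      (IsProcessOf N Q ∧ RawProc.IsPrefix Q P ∧ Q.transitions = U ∧
        Q.places = {p ∈ P.places |
          (∀ t, P.flowTP t p = 0) ∨ ∃ t ∈ U, P.flowTP t p ≠ 0}) ∧
      ∀ Q' : RawProc S T α β, IsProcessOf N Q' → RawProc.IsPrefix Q' P →
        Q'.transitions = U →
        (Q'.places = Q.places ∧ Q'.initMark = Q.initMark ∧
          (∀ p ∈ Q.places, ∀ t ∈ U,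
            Q'.flowPT p t = Q.flowPT p t ∧ Q'.flowTP t p = Q.flowTP t p) ∧
          (∀ p ∈ Q.places, Q'.projS p = Q.projS p) ∧
          (∀ t ∈ U, Q'.projT t = Q.projT t)) := by
  set Q := P.restrict (P.prefixPlaces U) U
  have hQP : Q.IsPrefix P := P.isPrefix_restrict (fun _ hp => hp.1) hU
  refine ⟨Q, ⟨hP.restrict_prefixPlaces hU hdc, hQP, rfl, rfl⟩, fun Q' hQ' hQ'P hQ'U => ?_⟩
  have hpl : Q'.places = Q.places := by
    rw [hP.places_eq_prefixPlaces_of_isPrefix hQ' hQ'P, hQ'U]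
    rfl
  obtain ⟨-, -, hinit, hflow, hprojS, hprojT⟩ := hQ'P
  obtain ⟨-, -, hQinit, hQflow, hQprojS, hQprojT⟩ := hQP
  subst hQ'U
  refine ⟨hpl, hinit.trans hQinit.symm, fun p hp t ht => ?_, fun p hp => ?_, fun t ht => ?_⟩
  · have hp' : p ∈ Q'.places := hpl ▸ hp
    exact ⟨(hflow p hp' t ht).1.trans (hQflow p hp t ht).1.symm,
      (hflow p hp' t ht).2.trans (hQflow p hp t ht).2.symm⟩
  · exact (hprojS p (hpl ▸ hp)).trans (hQprojS p hp).symm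
  · exact (hprojT t ht).trans (hQprojT t ht).symm
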